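/- Let S be a spider graph with ℓ₁ ≥ 1 legs of length 1, ℓ₂ legs of length 2, and ℓ₃ legs of length 3. Then D(S,x) = x(1+x)^{ℓ₁}(2x+x²)^{ℓ₂}(2x+3x²+x³)^{ℓ₃} + x^{ℓ₁}(2x+x²)^{ℓ₂}(x+3x²+x³)^{ℓ₃}. -/

import Mathlib

/-!
A set of vertices of the spider is a choice of whether to take the centre, together with a set
of positions on every leg. It dominates iff each leg is dominated from within, its first vertex
possibly by the centre, and the centre itself is dominated. The last condition is automatic when
`l1 ≥ 1`: if the centre is not taken, every leg of length 1 must contain its vertex, which is a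
neighbour of the centre. Hence, for each of the two states of the centre, the generating function
factors into a product of one polynomial per leg, and those five polynomials are found by
enumerating the subsets of a path on at most three vertices.
-/

open Polynomial

/-- A finite set of vertices dominates the graph. -/
def Dominates {V : Type*} (G : SimpleGraph V) (U : Finset V) : Prop :=
  ∀ v : V, v ∈ U ∨ ∃ u ∈ U, G.Adj u v

/-- The number of dominating sets of size `i`. -/
noncomputable def domCount {V : Type*} [Fintype V] (G : SimpleGraph V) (i : ℕ) : ℕ :=
  Nat.card {U : Finset V // U.card = i ∧ Dominates G U}

/-- The domination polynomial. -/
noncomputable def domPoly {V : Type*} [Fintype V] (G : SimpleGraph V) : Polynomial ℤ :=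
  ∑ i ∈ Finset.range (Fintype.card V + 1), Polynomial.C (domCount G i : ℤ) * Polynomial.X ^ i

/-- Vertices of the spider with `l1` legs of length 1, `l2` legs of length 2 and `l3` legs
of length 3: the center is `none`, and each leg vertex carries its leg and its position
along the leg (position `0` is the endpoint attached to the center). -/
abbrev SpiderV (l1 l2 l3 : ℕ) :=
  Option ((Fin l1 × Fin 1) ⊕ (Fin l2 × Fin 2) ⊕ (Fin l3 × Fin 3))

/-- Consecutive vertices on a common leg. -/
def legRel {l1 l2 l3 : ℕ} :
    ((Fin l1 × Fin 1) ⊕ (Fin l2 × Fin 2) ⊕ (Fin l3 × Fin 3)) →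
      ((Fin l1 × Fin 1) ⊕ (Fin l2 × Fin 2) ⊕ (Fin l3 × Fin 3)) → Prop
  | .inl (a, i), .inl (b, j) => a = b ∧ (i : ℕ) + 1 = (j : ℕ)
  | .inr (.inl (a, i)), .inr (.inl (b, j)) => a = b ∧ (i : ℕ) + 1 = (j : ℕ)
  | .inr (.inr (a, i)), .inr (.inr (b, j)) => a = b ∧ (i : ℕ) + 1 = (j : ℕ)
  | _, _ => False

/-- The endpoint of a leg that is attached to the center. -/
def isLegEnd {l1 l2 l3 : ℕ} :
    ((Fin l1 × Fin 1) ⊕ (Fin l2 × Fin 2) ⊕ (Fin l3 × Fin 3)) → Prop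
  | .inl (_, i) => (i : ℕ) = 0
  | .inr (.inl (_, i)) => (i : ℕ) = 0
  | .inr (.inr (_, i)) => (i : ℕ) = 0

/-- The asymmetric adjacency relation of the spider. -/
def spiderRel {l1 l2 l3 : ℕ} : SpiderV l1 l2 l3 → SpiderV l1 l2 l3 → Prop
  | none, some x => isLegEnd x
  | some x, some y => legRel x y
  | _, _ => False

/-- The spider graph with `l1` legs of length 1, `l2` legs of length 2, `l3` legs of length 3. -/
def spider (l1 l2 l3 : ℕ) : SimpleGraph (SpiderV l1 l2 l3) :=
  SimpleGraph.fromRel spiderRel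

open Finset

theorem sum_ite_X_pow_card {α : Type*} [Fintype α] (P : Finset α → Prop) [DecidablePred P] :
    (∑ U, if P U then (X : ℤ[X]) ^ #U else 0) =
      ∑ i ∈ range (Fintype.card α + 1), C (#{U | #U = i ∧ P U} : ℤ) * X ^ i := by
  rw [← sum_fiberwise_of_maps_to (g := card) (t := range (Fintype.card α + 1))
    fun U _ => mem_range.2 (Nat.lt_succ_of_le (card_le_univ U))]
  refine sum_congr rfl fun i _ => ?_
  rw [← sum_filter, filter_filter, sum_congr rfl fun U hU => by rw [(mem_filter.1 hU).2.1],
    sum_const, nsmul_eq_mul, C_eq_natCast]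

theorem domPoly_eq_sum {V : Type*} [Fintype V] (G : SimpleGraph V)
    [DecidablePred (Dominates G)] :
    domPoly G = ∑ U, if Dominates G U then X ^ #U else 0 := by
  rw [sum_ite_X_pow_card, domPoly]
  refine sum_congr rfl fun i _ => ?_
  rw [domCount, Nat.card_eq_fintype_card, Fintype.card_subtype]

/-- Domination of the path `0 - 1 - ⋯ - (k-1)` by `S`, where `c` says whether vertex `0` is also
dominated from outside, as the first vertex of a leg is by a chosen centre. -/
def LegDominated {k : ℕ} (c : Bool) (S : Finset (Fin k)) : Prop :=
  ∀ i : Fin k, i ∈ S ∨ ((i : ℕ) = 0 ∧ c = true) ∨ ∃ j ∈ S, (j : ℕ) + 1 = i ∨ (i : ℕ) + 1 = j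

instance {k : ℕ} (c : Bool) : DecidablePred (LegDominated (k := k) c) :=
  fun _ => by unfold LegDominated; infer_instance

theorem LegDominated.zero_mem {S : Finset (Fin 1)} (h : LegDominated false S) : 0 ∈ S := by
  simpa [LegDominated] using h 0

noncomputable def legWeight {k : ℕ} (c : Bool) (S : Finset (Fin k)) : ℤ[X] :=
  if LegDominated c S then X ^ #S else 0

noncomputable def legPoly (k : ℕ) (c : Bool) : ℤ[X] :=
  ∑ S : Finset (Fin k), legWeight c S

theorem legPoly_eq (k : ℕ) (c : Bool) :
    legPoly k c =
      ∑ i ∈ range (k + 1), C (#{S : Finset (Fin k) | #S = i ∧ LegDominated c S} : ℤ) * X ^ i := by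
  simp only [legPoly, legWeight]
  rw [sum_ite_X_pow_card, Fintype.card_fin]

theorem legPoly_one_true : legPoly 1 true = 1 + X := by
  rw [legPoly_eq, sum_range_succ, sum_range_one,
    show #{S : Finset (Fin 1) | #S = 0 ∧ LegDominated true S} = 1 by decide,
    show #{S : Finset (Fin 1) | #S = 1 ∧ LegDominated true S} = 1 by decide]
  simp

theorem legPoly_one_false : legPoly 1 false = X := by
  rw [legPoly_eq, sum_range_succ, sum_range_one,
    show #{S : Finset (Fin 1) | #S = 0 ∧ LegDominated false S} = 0 by decide,
    show #{S : Finset (Fin 1) | #S = 1 ∧ LegDominated false S} = 1 by decide]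
  simp

theorem legPoly_two (c : Bool) : legPoly 2 c = 2 * X + X ^ 2 := by
  rw [legPoly_eq, sum_range_succ, sum_range_succ, sum_range_one,
    show #{S : Finset (Fin 2) | #S = 0 ∧ LegDominated c S} = 0 by revert c; decide,
    show #{S : Finset (Fin 2) | #S = 1 ∧ LegDominated c S} = 2 by revert c; decide,
    show #{S : Finset (Fin 2) | #S = 2 ∧ LegDominated c S} = 1 by revert c; decide]
  simp

theorem legPoly_three_true : legPoly 3 true = 2 * X + 3 * X ^ 2 + X ^ 3 := by
  rw [legPoly_eq, sum_range_succ, sum_range_succ, sum_range_succ, sum_range_one,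
    show #{S : Finset (Fin 3) | #S = 0 ∧ LegDominated true S} = 0 by decide,
    show #{S : Finset (Fin 3) | #S = 1 ∧ LegDominated true S} = 2 by decide,
    show #{S : Finset (Fin 3) | #S = 2 ∧ LegDominated true S} = 3 by decide,
    show #{S : Finset (Fin 3) | #S = 3 ∧ LegDominated true S} = 1 by decide]
  simp

theorem legPoly_three_false : legPoly 3 false = X + 3 * X ^ 2 + X ^ 3 := by
  rw [legPoly_eq, sum_range_succ, sum_range_succ, sum_range_succ, sum_range_one,
    show #{S : Finset (Fin 3) | #S = 0 ∧ LegDominated false S} = 0 by decide,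
    show #{S : Finset (Fin 3) | #S = 1 ∧ LegDominated false S} = 1 by decide,
    show #{S : Finset (Fin 3) | #S = 2 ∧ LegDominated false S} = 3 by decide,
    show #{S : Finset (Fin 3) | #S = 3 ∧ LegDominated false S} = 1 by decide]
  simp

variable {l1 l2 l3 : ℕ}

@[simp] theorem spider_adj_none_some (x) :
    (spider l1 l2 l3).Adj none (some x) ↔ isLegEnd x := by
  simp [spider, spiderRel]

@[simp] theorem spider_adj_some_none (x) :
    (spider l1 l2 l3).Adj (some x) none ↔ isLegEnd x := by
  simp [spider, spiderRel]

@[simp] theorem spider_adj_some_some (x y) :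
    (spider l1 l2 l3).Adj (some x) (some y) ↔ legRel x y ∨ legRel y x := by
  simp only [spider, SimpleGraph.fromRel_adj, spiderRel, ne_eq, Option.some.injEq,
    and_iff_right_iff_imp]
  rintro (h | h) rfl <;> rcases x with _ | _ | _ <;> simp [legRel] at h

/-- The vertex set that contains the centre iff `c` and meets the `a`-th leg of length `k` in the
positions `fk a`. -/
def spiderMem (c : Bool) (f1 : Fin l1 → Finset (Fin 1)) (f2 : Fin l2 → Finset (Fin 2))
    (f3 : Fin l3 → Finset (Fin 3)) : SpiderV l1 l2 l3 → Bool
  | none => c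
  | some (.inl (a, i)) => i ∈ f1 a
  | some (.inr (.inl (a, i))) => i ∈ f2 a
  | some (.inr (.inr (a, i))) => i ∈ f3 a

def spiderSet (c : Bool) (f1 : Fin l1 → Finset (Fin 1)) (f2 : Fin l2 → Finset (Fin 2))
    (f3 : Fin l3 → Finset (Fin 3)) : Finset (SpiderV l1 l2 l3) :=
  {v | spiderMem c f1 f2 f3 v}

section
variable {c : Bool} {f1 : Fin l1 → Finset (Fin 1)} {f2 : Fin l2 → Finset (Fin 2)}
  {f3 : Fin l3 → Finset (Fin 3)}

@[simp] theorem mem_spiderSet {v : SpiderV l1 l2 l3} :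
    v ∈ spiderSet c f1 f2 f3 ↔ spiderMem c f1 f2 f3 v = true := by
  simp [spiderSet]

theorem dominates_spiderSet_iff :
    Dominates (spider l1 l2 l3) (spiderSet c f1 f2 f3) ↔
      (c = true ∨ (∃ a, 0 ∈ f1 a) ∨ (∃ a, 0 ∈ f2 a) ∨ ∃ a, 0 ∈ f3 a) ∧
      (∀ a, LegDominated c (f1 a)) ∧ (∀ a, LegDominated c (f2 a)) ∧
      ∀ a, LegDominated c (f3 a) := by
  simp [Dominates, LegDominated, spiderMem, Option.forall, Sum.forall, Option.exists,
    Sum.exists, legRel, isLegEnd, exists_or, Fin.forall_fin_succ, Fin.exists_fin_succ]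

theorem card_spiderSet :
    #(spiderSet c f1 f2 f3) = c.toNat + ∑ a, #(f1 a) + ∑ a, #(f2 a) + ∑ a, #(f3 a) := by
  rw [spiderSet, card_filter, Fintype.sum_option, Fintype.sum_sum_type, Fintype.sum_sum_type,
    Fintype.sum_prod_type, Fintype.sum_prod_type, Fintype.sum_prod_type]
  cases c <;> simp [spiderMem, add_assoc, -univ_unique]

end

@[simps]
def spiderSetEquiv :
    Bool × (Fin l1 → Finset (Fin 1)) × (Fin l2 → Finset (Fin 2)) × (Fin l3 → Finset (Fin 3)) ≃
      Finset (SpiderV l1 l2 l3) where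
  toFun p := spiderSet p.1 p.2.1 p.2.2.1 p.2.2.2
  invFun U := (none ∈ U, fun a => {i | decide (some (.inl (a, i)) ∈ U)},
    fun a => {i | decide (some (.inr (.inl (a, i))) ∈ U)},
    fun a => {i | decide (some (.inr (.inr (a, i))) ∈ U)})
  left_inv := by
    rintro ⟨c, f1, f2, f3⟩
    refine Prod.ext (by simp [spiderMem]) (Prod.ext ?_ (Prod.ext ?_ ?_)) <;>
      funext a <;> ext i <;> simp [spiderMem, -univ_unique]
  right_inv U := by
    ext (_ | ⟨a, i⟩ | ⟨a, i⟩ | ⟨a, i⟩) <;> simp [spiderMem, Fin.eq_zero]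

theorem ite_dominates_spiderSet (h1 : 1 ≤ l1) [DecidablePred (Dominates (spider l1 l2 l3))]
    (c : Bool) (f1 : Fin l1 → Finset (Fin 1)) (f2 : Fin l2 → Finset (Fin 2))
    (f3 : Fin l3 → Finset (Fin 3)) :
    (if Dominates (spider l1 l2 l3) (spiderSet c f1 f2 f3) then
        X ^ #(spiderSet c f1 f2 f3) else 0 : ℤ[X]) =
      X ^ c.toNat * (∏ a, legWeight c (f1 a)) * (∏ a, legWeight c (f2 a)) *
        ∏ a, legWeight c (f3 a) := by
  have hcentre (h : ∀ a, LegDominated c (f1 a)) :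
      c = true ∨ (∃ a, 0 ∈ f1 a) ∨ (∃ a, 0 ∈ f2 a) ∨ ∃ a, 0 ∈ f3 a := by
    cases c
    · exact Or.inr (Or.inl ⟨⟨0, h1⟩, (h _).zero_mem⟩)
    · exact Or.inl rfl
  have hdom : Dominates (spider l1 l2 l3) (spiderSet c f1 f2 f3) ↔
      (∀ a, LegDominated c (f1 a)) ∧ (∀ a, LegDominated c (f2 a)) ∧
        ∀ a, LegDominated c (f3 a) :=
    dominates_spiderSet_iff.trans (and_iff_right_of_imp fun h => hcentre h.1)
  simp only [hdom, legWeight, Fintype.prod_ite_zero, prod_pow_eq_pow_sum, card_spiderSet, pow_add]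
  split_ifs <;> simp_all

theorem sum_ite_dominates_spiderSet (h1 : 1 ≤ l1) [DecidablePred (Dominates (spider l1 l2 l3))]
    (c : Bool) :
    ∑ f1 : Fin l1 → Finset (Fin 1), ∑ f2 : Fin l2 → Finset (Fin 2),
      ∑ f3 : Fin l3 → Finset (Fin 3),
        (if Dominates (spider l1 l2 l3) (spiderSet c f1 f2 f3) then
          X ^ #(spiderSet c f1 f2 f3) else 0 : ℤ[X]) =
      X ^ c.toNat * legPoly 1 c ^ l1 * legPoly 2 c ^ l2 * legPoly 3 c ^ l3 := by
  simp only [ite_dominates_spiderSet h1, ← mul_sum, ← sum_mul, legPoly, Fintype.sum_pow]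

theorem domPoly_spider_pos (l1 l2 l3 : ℕ) (h1 : 1 ≤ l1) :
    domPoly (spider l1 l2 l3) =
      X * (1 + X) ^ l1 * (2 * X + X ^ 2) ^ l2 * (2 * X + 3 * X ^ 2 + X ^ 3) ^ l3
        + X ^ l1 * (2 * X + X ^ 2) ^ l2 * (X + 3 * X ^ 2 + X ^ 3) ^ l3 := by
  classical
  rw [domPoly_eq_sum, ← Fintype.sum_equiv spiderSetEquiv _ _ fun _ => rfl,
    Fintype.sum_prod_type, Fintype.sum_bool]
  simp only [Fintype.sum_prod_type, spiderSetEquiv_apply]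
  rw [sum_ite_dominates_spiderSet h1, sum_ite_dominates_spiderSet h1, legPoly_one_true,
    legPoly_one_false, legPoly_two, legPoly_two, legPoly_three_true, legPoly_three_false]
  simp
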